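/- (Theorem 1, monotone form.) Optimality of sampling is monotone in the channel quality: let J* be the unique fixed point of the Bellman operator T of the decoupled single-source subproblem, fix a state (E,K) with E ≥ Es, and let σ(p) = K·(1−p) + α·p·G_{J*}(E−Es,1) + α·(1−p)·G_{J*}(E−Es,K⁺) denote the expected sampling cost. Then for all 0 ≤ p ≤ p' ≤ 1, if sampling is optimal at success probability p (i.e., σ(p) ≤ u_{J*}(E,K)), then sampling is also optimal at p' (i.e., σ(p') ≤ u_{J*}(E,K)). -/

import Mathlib

open Finset Filter Topology

/-- Energy level after one unit of energy arrival, clamped at buffer size `B`. -/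
def clampAdd {B : ℕ} (e : Fin (B+1)) : Fin (B+1) :=
  ⟨min (e.val + 1) B, by omega⟩

/-- Energy level after spending `Es` units of energy. -/
def subE {B : ℕ} (Es : ℕ) (e : Fin (B+1)) : Fin (B+1) :=
  ⟨e.val - Es, by have := e.isLt; omega⟩

/-- Age update `K⁺ = min (K+1) Kmax`; ages in `{1,…,Kmax}` are represented by
`Fin Kmax`, where index `k` stands for age `k+1`. -/
def succAge {Kmax : ℕ} (k : Fin Kmax) : Fin Kmax :=
  ⟨min (k.val + 1) (Kmax - 1), by have := k.isLt; omega⟩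

/-- The state of age `1` (index `0`). -/
def ageOne {Kmax : ℕ} (k : Fin Kmax) : Fin Kmax := ⟨0, k.pos⟩

/-- The real-valued age of a state with age index `k`. -/
def ageVal {Kmax : ℕ} (k : Fin Kmax) : ℝ := (k.val : ℝ) + 1

/-- `G_J(E,K) = λ·J(min(E+1,B),K) + (1−λ)·J(E,K)`. -/
noncomputable def GVal {B Kmax : ℕ} (lam : ℝ) (J : Fin (B+1) × Fin Kmax → ℝ)
    (e : Fin (B+1)) (k : Fin Kmax) : ℝ :=
  lam * J (clampAdd e, k) + (1 - lam) * J (e, k)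

/-- The not-sampling value `u_J(E,K) = K + α·G_J(E,K⁺)`. -/
noncomputable def uVal {B Kmax : ℕ} (lam alpha : ℝ) (J : Fin (B+1) × Fin Kmax → ℝ)
    (e : Fin (B+1)) (k : Fin Kmax) : ℝ :=
  ageVal k + alpha * GVal lam J e (succAge k)

/-- The expected sampling cost
`σ_J(p) = K·(1−p) + α·p·G_J(E−Es,1) + α·(1−p)·G_J(E−Es,K⁺)`. -/
noncomputable def sigVal {B Kmax : ℕ} (Es : ℕ) (lam alpha : ℝ)
    (J : Fin (B+1) × Fin Kmax → ℝ) (e : Fin (B+1)) (k : Fin Kmax) (p : ℝ) : ℝ :=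
  ageVal k * (1 - p) + alpha * p * GVal lam J (subE Es e) (ageOne k)
    + alpha * (1 - p) * GVal lam J (subE Es e) (succAge k)

/-- The post-probing value `W_J(E,K,p) = min { u_J(E,K), σ_J(p) }`. -/
noncomputable def WVal {B Kmax : ℕ} (Es : ℕ) (lam alpha : ℝ)
    (J : Fin (B+1) × Fin Kmax → ℝ) (e : Fin (B+1)) (k : Fin Kmax) (p : ℝ) : ℝ :=
  min (uVal lam alpha J e k) (sigVal Es lam alpha J e k p)

/-- The probing value `v_J(E,K) = μ̂ + Σ_j q_j · W_J(E,K,p_j)`. -/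
noncomputable def vVal {B Kmax : ℕ} (Es m : ℕ) (lam alpha mu : ℝ)
    (q pr : Fin m → ℝ) (J : Fin (B+1) × Fin Kmax → ℝ)
    (e : Fin (B+1)) (k : Fin Kmax) : ℝ :=
  mu + ∑ j, q j * WVal Es lam alpha J e k (pr j)

/-- The Bellman operator `T` of the decoupled single-source subproblem. -/
noncomputable def bellman {B Kmax : ℕ} (Es m : ℕ) (lam alpha mu : ℝ)
    (q pr : Fin m → ℝ) (J : Fin (B+1) × Fin Kmax → ℝ) :
    Fin (B+1) × Fin Kmax → ℝ :=
  fun s =>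
    if Es ≤ s.1.val then
      min (uVal lam alpha J s.1 s.2) (vVal Es m lam alpha mu q pr J s.1 s.2)
    else uVal lam alpha J s.1 s.2

section Aux

variable {B Kmax : ℕ} {Es m : ℕ} {lam alpha mu : ℝ} {q pr : Fin m → ℝ}

/-- Monotone in the age index. -/
def AgeMono {B Kmax : ℕ} (J : Fin (B+1) × Fin Kmax → ℝ) : Prop :=
  ∀ (e : Fin (B+1)) (k₁ k₂ : Fin Kmax), k₁ ≤ k₂ → J (e, k₁) ≤ J (e, k₂)

lemma GVal_mono (hlam0 : 0 ≤ lam) (hlam1 : lam ≤ 1)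
    {J : Fin (B+1) × Fin Kmax → ℝ} (hJ : AgeMono J)
    (e : Fin (B+1)) {k₁ k₂ : Fin Kmax} (hk : k₁ ≤ k₂) :
    GVal lam J e k₁ ≤ GVal lam J e k₂ := by
  unfold GVal
  have h1 := hJ (clampAdd e) k₁ k₂ hk
  have h2 := hJ e k₁ k₂ hk
  nlinarith

lemma succAge_mono {k₁ k₂ : Fin Kmax} (hk : k₁ ≤ k₂) : succAge k₁ ≤ succAge k₂ := by
  have : k₁.val ≤ k₂.val := hk
  simp only [succAge, Fin.mk_le_mk]
  omega

lemma ageVal_mono {k₁ k₂ : Fin Kmax} (hk : k₁ ≤ k₂) : ageVal k₁ ≤ ageVal k₂ := by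
  have : k₁.val ≤ k₂.val := hk
  unfold ageVal
  have : (k₁.val : ℝ) ≤ (k₂.val : ℝ) := by exact_mod_cast this
  linarith

lemma uVal_mono (hlam0 : 0 ≤ lam) (hlam1 : lam ≤ 1) (halpha0 : 0 ≤ alpha)
    {J : Fin (B+1) × Fin Kmax → ℝ} (hJ : AgeMono J)
    (e : Fin (B+1)) {k₁ k₂ : Fin Kmax} (hk : k₁ ≤ k₂) :
    uVal lam alpha J e k₁ ≤ uVal lam alpha J e k₂ := by
  unfold uVal
  have := GVal_mono hlam0 hlam1 hJ e (succAge_mono hk)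
  have := ageVal_mono (Kmax := Kmax) hk
  nlinarith

lemma sigVal_mono (hlam0 : 0 ≤ lam) (hlam1 : lam ≤ 1) (halpha0 : 0 ≤ alpha)
    {J : Fin (B+1) × Fin Kmax → ℝ} (hJ : AgeMono J)
    (e : Fin (B+1)) {k₁ k₂ : Fin Kmax} (hk : k₁ ≤ k₂) {p : ℝ}
    (hp0 : 0 ≤ p) (hp1 : p ≤ 1) :
    sigVal Es lam alpha J e k₁ p ≤ sigVal Es lam alpha J e k₂ p := by
  unfold sigVal
  have hone : ageOne k₁ = ageOne k₂ := by simp [ageOne]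
  rw [hone]
  have h1 := GVal_mono hlam0 hlam1 hJ (subE Es e) (succAge_mono hk)
  have h2 := ageVal_mono (Kmax := Kmax) hk
  have h3 : (0:ℝ) ≤ 1 - p := by linarith
  have h4 := mul_le_mul_of_nonneg_right h2 h3
  have h5 := mul_le_mul_of_nonneg_left h1 (mul_nonneg halpha0 h3)
  linarith

lemma bellman_ageMono (hlam0 : 0 ≤ lam) (hlam1 : lam ≤ 1) (halpha0 : 0 ≤ alpha)
    (hq0 : ∀ j, 0 ≤ q j) (hpr : ∀ j, 0 ≤ pr j ∧ pr j ≤ 1)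
    {J : Fin (B+1) × Fin Kmax → ℝ} (hJ : AgeMono J) :
    AgeMono (bellman Es m lam alpha mu q pr J) := by
  intro e k₁ k₂ hk
  have hu := uVal_mono hlam0 hlam1 halpha0 hJ e hk
  have hv : vVal Es m lam alpha mu q pr J e k₁ ≤ vVal Es m lam alpha mu q pr J e k₂ := by
    unfold vVal
    apply add_le_add_right
    apply Finset.sum_le_sum
    intro j _
    exact mul_le_mul_of_nonneg_left
      (min_le_min hu (sigVal_mono hlam0 hlam1 halpha0 hJ e hk (hpr j).1 (hpr j).2)) (hq0 j)
  unfold bellman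
  by_cases h : Es ≤ e.val <;> simp [h]
  · exact ⟨Or.inl hu, Or.inr hv⟩
  · exact hu

lemma abs_GVal_sub (hlam0 : 0 ≤ lam) (hlam1 : lam ≤ 1)
    (J J' : Fin (B+1) × Fin Kmax → ℝ) (e : Fin (B+1)) (k : Fin Kmax) :
    |GVal lam J e k - GVal lam J' e k| ≤ ‖J - J'‖ := by
  have h1 : |J (clampAdd e, k) - J' (clampAdd e, k)| ≤ ‖J - J'‖ := by
    have h := norm_le_pi_norm (J - J') (clampAdd e, k)
    simp only [Pi.sub_apply, Real.norm_eq_abs] at h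
    exact h
  have h2 : |J (e, k) - J' (e, k)| ≤ ‖J - J'‖ := by
    have h := norm_le_pi_norm (J - J') (e, k)
    simp only [Pi.sub_apply, Real.norm_eq_abs] at h
    exact h
  rw [abs_le] at h1 h2 ⊢
  unfold GVal
  constructor <;> nlinarith

lemma abs_uVal_sub (hlam0 : 0 ≤ lam) (hlam1 : lam ≤ 1) (halpha0 : 0 ≤ alpha)
    (J J' : Fin (B+1) × Fin Kmax → ℝ) (e : Fin (B+1)) (k : Fin Kmax) :
    |uVal lam alpha J e k - uVal lam alpha J' e k| ≤ alpha * ‖J - J'‖ := by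
  have h := abs_GVal_sub hlam0 hlam1 J J' e (succAge k)
  rw [abs_le] at h ⊢
  unfold uVal
  constructor <;> nlinarith

lemma abs_sigVal_sub (hlam0 : 0 ≤ lam) (hlam1 : lam ≤ 1) (halpha0 : 0 ≤ alpha)
    (J J' : Fin (B+1) × Fin Kmax → ℝ) (e : Fin (B+1)) (k : Fin Kmax)
    {p : ℝ} (hp0 : 0 ≤ p) (hp1 : p ≤ 1) :
    |sigVal Es lam alpha J e k p - sigVal Es lam alpha J' e k p| ≤ alpha * ‖J - J'‖ := by
  have h1 := abs_GVal_sub hlam0 hlam1 J J' (subE Es e) (ageOne k)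
  have h2 := abs_GVal_sub hlam0 hlam1 J J' (subE Es e) (succAge k)
  rw [abs_le] at h1 h2 ⊢
  unfold sigVal
  have key : alpha * p * ‖J - J'‖ + alpha * (1 - p) * ‖J - J'‖ = alpha * ‖J - J'‖ := by ring
  have hap : 0 ≤ alpha * p := mul_nonneg halpha0 hp0
  have hap' : 0 ≤ alpha * (1 - p) := mul_nonneg halpha0 (by linarith)
  have a1 := mul_le_mul_of_nonneg_left h1.2 hap
  have a2 := mul_le_mul_of_nonneg_left h1.1 hap
  have a3 := mul_le_mul_of_nonneg_left h2.2 hap'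
  have a4 := mul_le_mul_of_nonneg_left h2.1 hap'
  constructor <;> nlinarith

lemma abs_bellman_sub (hlam0 : 0 ≤ lam) (hlam1 : lam ≤ 1) (halpha0 : 0 ≤ alpha)
    (hq0 : ∀ j, 0 ≤ q j) (hq1 : ∑ j, q j = 1) (hpr : ∀ j, 0 ≤ pr j ∧ pr j ≤ 1)
    (J J' : Fin (B+1) × Fin Kmax → ℝ) (s : Fin (B+1) × Fin Kmax) :
    |bellman Es m lam alpha mu q pr J s - bellman Es m lam alpha mu q pr J' s|
      ≤ alpha * ‖J - J'‖ := by
  obtain ⟨e, k⟩ := s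
  have hu := abs_uVal_sub hlam0 hlam1 halpha0 J J' e k
  have hW : ∀ j : Fin m,
      |WVal Es lam alpha J e k (pr j) - WVal Es lam alpha J' e k (pr j)|
        ≤ alpha * ‖J - J'‖ := by
    intro j
    refine le_trans (abs_min_sub_min_le_max _ _ _ _) (max_le hu ?_)
    exact abs_sigVal_sub hlam0 hlam1 halpha0 J J' e k (hpr j).1 (hpr j).2
  have hv : |vVal Es m lam alpha mu q pr J e k - vVal Es m lam alpha mu q pr J' e k|
      ≤ alpha * ‖J - J'‖ := by
    unfold vVal
    have : (mu + ∑ j, q j * WVal Es lam alpha J e k (pr j))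
        - (mu + ∑ j, q j * WVal Es lam alpha J' e k (pr j))
        = ∑ j, q j * (WVal Es lam alpha J e k (pr j) - WVal Es lam alpha J' e k (pr j)) := by
      simp only [mul_sub, Finset.sum_sub_distrib]
      ring
    rw [this]
    calc |∑ j, q j * (WVal Es lam alpha J e k (pr j) - WVal Es lam alpha J' e k (pr j))|
        ≤ ∑ j, |q j * (WVal Es lam alpha J e k (pr j) - WVal Es lam alpha J' e k (pr j))| :=
          Finset.abs_sum_le_sum_abs _ _
      _ ≤ ∑ j : Fin m, q j * (alpha * ‖J - J'‖) := by
          apply Finset.sum_le_sum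
          intro j _
          rw [abs_mul, abs_of_nonneg (hq0 j)]
          exact mul_le_mul_of_nonneg_left (hW j) (hq0 j)
      _ = alpha * ‖J - J'‖ := by rw [← Finset.sum_mul, hq1, one_mul]
  unfold bellman
  by_cases h : Es ≤ e.val <;> simp only [h, if_true, if_false]
  · exact le_trans (abs_min_sub_min_le_max _ _ _ _) (max_le hu hv)
  · exact hu

end Aux

theorem sampling_optimal_monotone (B Es Kmax m : ℕ) (lam alpha mu : ℝ) (q pr : Fin m → ℝ)
    (hEs1 : 1 ≤ Es) (hEsB : Es ≤ B)
    (hlam0 : 0 ≤ lam) (hlam1 : lam ≤ 1)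
    (halpha0 : 0 ≤ alpha) (halpha1 : alpha < 1)
    (hmu : 0 ≤ mu) (hK : 1 ≤ Kmax) (hm : 1 ≤ m)
    (hq0 : ∀ j, 0 ≤ q j) (hq1 : ∑ j, q j = 1)
    (hpr : ∀ j, 0 ≤ pr j ∧ pr j ≤ 1)
    (Jstar : Fin (B+1) × Fin Kmax → ℝ)
    (hfix : bellman Es m lam alpha mu q pr Jstar = Jstar)
    (huniq : ∀ J' : Fin (B+1) × Fin Kmax → ℝ, bellman Es m lam alpha mu q pr J' = J' → J' = Jstar)
    (e : Fin (B+1)) (k : Fin Kmax) (hE : Es ≤ e.val)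
    (p p' : ℝ) (hp0 : 0 ≤ p) (hpp' : p ≤ p') (hp'1 : p' ≤ 1)
    (hsamp : sigVal Es lam alpha Jstar e k p ≤ uVal lam alpha Jstar e k) :
    sigVal Es lam alpha Jstar e k p' ≤ uVal lam alpha Jstar e k := by
  set T : (Fin (B+1) × Fin Kmax → ℝ) → (Fin (B+1) × Fin Kmax → ℝ) :=
    bellman Es m lam alpha mu q pr with hT
  set f : ℕ → (Fin (B+1) × Fin Kmax → ℝ) := fun n => T^[n] (fun _ => 0) with hf
  set C : ℝ := ‖(fun _ => (0:ℝ)) - Jstar‖ with hC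
  have hlip : ∀ J J' : Fin (B+1) × Fin Kmax → ℝ, ‖T J - T J'‖ ≤ alpha * ‖J - J'‖ := by
    intro J J'
    rw [pi_norm_le_iff_of_nonneg (mul_nonneg halpha0 (norm_nonneg _))]
    intro s
    have h := abs_bellman_sub (Es := Es) (mu := mu) hlam0 hlam1 halpha0 hq0 hq1 hpr J J' s
    rw [Pi.sub_apply, Real.norm_eq_abs, hT]
    exact h
  have hmono : ∀ n, AgeMono (f n) := by
    intro n
    induction n with
    | zero =>
        intro e' k₁ k₂ _
        simp [hf]
    | succ n ih =>
        have hstep : f (n+1) = T (f n) := Function.iterate_succ_apply' T n _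
        rw [hstep]
        exact bellman_ageMono hlam0 hlam1 halpha0 hq0 hpr ih
  have hdist : ∀ n, ‖f n - Jstar‖ ≤ alpha ^ n * C := by
    intro n
    induction n with
    | zero =>
        simp only [pow_zero, one_mul]
        exact le_of_eq rfl
    | succ n ih =>
        have hstep : f (n+1) - Jstar = T (f n) - T Jstar := by
          rw [hfix, show f (n+1) = T (f n) from Function.iterate_succ_apply' T n _]
        calc ‖f (n+1) - Jstar‖ = ‖T (f n) - T Jstar‖ := by rw [hstep]
          _ ≤ alpha * ‖f n - Jstar‖ := hlip _ _
          _ ≤ alpha * (alpha ^ n * C) := mul_le_mul_of_nonneg_left ih halpha0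
          _ = alpha ^ (n+1) * C := by ring
  have hten : ∀ s : Fin (B+1) × Fin Kmax,
      Tendsto (fun n => f n s) atTop (nhds (Jstar s)) := by
    intro s
    rw [tendsto_iff_norm_sub_tendsto_zero]
    have hC' : Tendsto (fun n => alpha ^ n * C) atTop (nhds 0) := by
      simpa using (tendsto_pow_atTop_nhds_zero_of_lt_one halpha0 halpha1).mul_const C
    refine squeeze_zero (fun n => norm_nonneg _) (fun n => ?_) hC'
    calc ‖f n s - Jstar s‖ = ‖(f n - Jstar) s‖ := by simp [Pi.sub_apply]
      _ ≤ ‖f n - Jstar‖ := norm_le_pi_norm _ _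
      _ ≤ alpha ^ n * C := hdist n
  have hJmono : AgeMono Jstar := by
    intro e' k₁ k₂ hk
    exact le_of_tendsto_of_tendsto' (hten (e', k₁)) (hten (e', k₂))
      (fun n => hmono n e' k₁ k₂ hk)
  have hk01 : ageOne k ≤ succAge k := Fin.mk_le_mk.mpr (Nat.zero_le _)
  have hG := GVal_mono hlam0 hlam1 hJmono (subE Es e) hk01
  have hK1 : (0:ℝ) ≤ ageVal k := by
    unfold ageVal
    positivity
  have hc : alpha * GVal lam Jstar (subE Es e) (ageOne k)
      ≤ ageVal k + alpha * GVal lam Jstar (subE Es e) (succAge k) := by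
    have := mul_le_mul_of_nonneg_left hG halpha0
    linarith
  have h6 : 0 ≤ (p' - p) * (ageVal k + alpha * GVal lam Jstar (subE Es e) (succAge k)
      - alpha * GVal lam Jstar (subE Es e) (ageOne k)) :=
    mul_nonneg (by linarith) (by linarith)
  unfold sigVal at hsamp ⊢
  nlinarith [h6, hsamp]
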